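/- arXiv:math/0108162 — 4 statements merged into one kernel-verified Lean document; each statement's English description precedes it below -/
import Mathlib

section
/- Let (X, d) be a metric space satisfying the CAT(0) (Non-Positive Curvature in the sense of Alexandrov) comparison inequality: for all points A, B, C and a point P that is a geodesic interpolation of B and C at parameter λ ∈ [0,1] (i.e., d(P,B) = λ·d(B,C) and d(P,C) = (1-λ)·d(B,C)), one has d(A,P)² ≤ (1-λ)·d(A,B)² + λ·d(A,C)² - λ(1-λ)·d(B,C)². Then for any two points p, q with d(p,q) = l and any geodesic γ : [0,1] → X from p to q parameterized proportionally to arc length, and any curve c : [0,1] → X from p to q parameterized proportionally to arc length with length l' ≥ l, we have d(c(s), γ(s)) ≤ √((l'² - l²)/4) for all s ∈ [0,1]. -/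
/-- In a metric space satisfying the CAT(0) comparison inequality, any curve from `p` to `q`
of length `l'` parameterized proportionally to arc length stays within distance
`√((l'² - l²)/4)` of a constant-speed geodesic from `p` to `q`, where `l = d(p,q)`. -/
theorem stmt_1 {X : Type*} [MetricSpace X]
    (hCAT : ∀ (A B C P : X) (lam : ℝ), lam ∈ Set.Icc (0:ℝ) 1 →
      dist P B = lam * dist B C → dist P C = (1 - lam) * dist B C →
      dist A P ^ 2 ≤ (1 - lam) * dist A B ^ 2 + lam * dist A C ^ 2
        - lam * (1 - lam) * dist B C ^ 2)
    (p q : X) (l : ℝ) (hl : dist p q = l)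
    (γ : ℝ → X) (hγ0 : γ 0 = p) (hγ1 : γ 1 = q)
    (hγ : ∀ lam ∈ Set.Icc (0:ℝ) 1,
      dist (γ lam) p = lam * l ∧ dist (γ lam) q = (1 - lam) * l)
    (c : ℝ → X) (hc0 : c 0 = p) (hc1 : c 1 = q)
    (l' : ℝ) (hl' : l ≤ l')
    (harc : ∀ s t : ℝ, 0 ≤ s → s ≤ t → t ≤ 1 →
      eVariationOn c (Set.Icc s t) = ENNReal.ofReal ((t - s) * l')) :
    ∀ s ∈ Set.Icc (0:ℝ) 1, dist (c s) (γ s) ≤ Real.sqrt ((l' ^ 2 - l ^ 2) / 4) := by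
  intro s hs
  obtain ⟨hs0, hs1⟩ := hs
  have hl0 : 0 ≤ l := hl ▸ dist_nonneg
  have hl'0 : 0 ≤ l' := le_trans hl0 hl'
  obtain ⟨hg1, hg2⟩ := hγ s ⟨hs0, hs1⟩
  -- CAT inequality with A = c s, B = p, C = q, P = γ s
  have hcat := hCAT (c s) p q (γ s) s ⟨hs0, hs1⟩ (by rw [hg1, hl]) (by rw [hg2, hl])
  rw [hl] at hcat
  -- arc-length bounds
  have hb1 : dist (c s) p ≤ s * l' := by
    have h := eVariationOn.edist_le c (Set.left_mem_Icc.2 hs0)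
      (Set.mem_Icc.2 ⟨hs0, le_rfl⟩)
    rw [harc 0 s le_rfl hs0 hs1] at h
    have := (ENNReal.toReal_le_toReal (by simp [edist_dist]) ENNReal.ofReal_ne_top).2 h
    rw [ENNReal.toReal_ofReal (by nlinarith)] at this
    simpa [hc0, edist_dist, dist_comm, ENNReal.toReal_ofReal dist_nonneg] using this
  have hb2 : dist (c s) q ≤ (1 - s) * l' := by
    have h := eVariationOn.edist_le c (Set.mem_Icc.2 ⟨le_rfl, hs1⟩)
      (Set.right_mem_Icc.2 hs1)
    rw [harc s 1 hs0 hs1 le_rfl] at h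
    have := (ENNReal.toReal_le_toReal (by simp [edist_dist]) ENNReal.ofReal_ne_top).2 h
    rw [ENNReal.toReal_ofReal (by nlinarith)] at this
    simpa [hc1, edist_dist, ENNReal.toReal_ofReal dist_nonneg] using this
  have hsq : dist (c s) (γ s) ^ 2 ≤ (l' ^ 2 - l ^ 2) / 4 := by
    have d1n : 0 ≤ dist (c s) p := dist_nonneg
    have d2n : 0 ≤ dist (c s) q := dist_nonneg
    have hsq1 : dist (c s) p ^ 2 ≤ (s * l') ^ 2 := pow_le_pow_left₀ d1n hb1 2
    have hsq2 : dist (c s) q ^ 2 ≤ ((1 - s) * l') ^ 2 := pow_le_pow_left₀ d2n hb2 2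
    have hll : l ^ 2 ≤ l' ^ 2 := pow_le_pow_left₀ hl0 hl' 2
    nlinarith [mul_nonneg (sq_nonneg (2*s - 1)) (sub_nonneg.2 hll),
      mul_nonneg hs0 (sub_nonneg.2 hs1), sub_nonneg.2 hs1,
      mul_le_mul_of_nonneg_left hsq1 (sub_nonneg.2 hs1),
      mul_le_mul_of_nonneg_left hsq2 hs0]
  calc dist (c s) (γ s) = Real.sqrt (dist (c s) (γ s) ^ 2) := by
        rw [Real.sqrt_sq dist_nonneg]
    _ ≤ Real.sqrt ((l' ^ 2 - l ^ 2) / 4) := Real.sqrt_le_sqrt hsq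
end

section
/- Let (X, d) be a CAT(0) space in the comparison-inequality sense. Then for any two points p, q ∈ X, any sequence of curves c_i from p to q whose lengths L_i converge to d(p,q) converges uniformly (in the sense of distance, with all curves parameterized proportionally to arc length) to the unique geodesic joining p and q. -/
/-- In a CAT(0) space, a sequence of constant-speed curves from `p` to `q` whose lengths
converge to `d(p,q)` converges uniformly to the (unique) constant-speed geodesic from
`p` to `q`. -/
theorem stmt_2 {X : Type*} [MetricSpace X]
    (hCAT : ∀ (A B C P : X) (lam : ℝ), lam ∈ Set.Icc (0:ℝ) 1 →
      dist P B = lam * dist B C → dist P C = (1 - lam) * dist B C →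
      dist A P ^ 2 ≤ (1 - lam) * dist A B ^ 2 + lam * dist A C ^ 2
        - lam * (1 - lam) * dist B C ^ 2)
    (p q : X)
    (γ : ℝ → X) (hγ0 : γ 0 = p) (hγ1 : γ 1 = q)
    (hγ : ∀ lam ∈ Set.Icc (0:ℝ) 1,
      dist (γ lam) p = lam * dist p q ∧ dist (γ lam) q = (1 - lam) * dist p q)
    (c : ℕ → ℝ → X) (hc0 : ∀ i, c i 0 = p) (hc1 : ∀ i, c i 1 = q)
    (L : ℕ → ℝ)
    (harc : ∀ i, ∀ s t : ℝ, 0 ≤ s → s ≤ t → t ≤ 1 →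
      eVariationOn (c i) (Set.Icc s t) = ENNReal.ofReal ((t - s) * L i))
    (hLlim : Filter.Tendsto L Filter.atTop (nhds (dist p q))) :
    ∀ ε > (0:ℝ), ∃ N : ℕ, ∀ i ≥ N, ∀ s ∈ Set.Icc (0:ℝ) 1,
      dist (c i s) (γ s) ≤ ε := by
  intro ε hε
  set d := dist p q with hd
  have hMlim : Filter.Tendsto (fun i => max (L i) 0 ^ 2) Filter.atTop (nhds (d ^ 2)) := by
    have h1 : Filter.Tendsto (fun i => max (L i) 0) Filter.atTop (nhds (max d 0)) :=
      hLlim.max tendsto_const_nhds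
    rw [max_eq_left dist_nonneg] at h1
    exact h1.pow 2
  obtain ⟨N, hN⟩ := (Metric.tendsto_atTop.mp hMlim) (4 * ε ^ 2) (by positivity)
  refine ⟨N, fun i hi s hs => ?_⟩
  set M := max (L i) 0 with hM
  have hM0 : (0 : ℝ) ≤ M := le_max_right _ _
  have key : ∀ a b : ℝ, 0 ≤ a → a ≤ b → b ≤ 1 → dist (c i a) (c i b) ≤ (b - a) * M := by
    intro a b ha hab hb1
    have h1 : edist (c i a) (c i b) ≤ eVariationOn (c i) (Set.Icc a b) :=
      eVariationOn.edist_le _ ⟨le_refl a, hab⟩ ⟨hab, le_refl b⟩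
    rw [harc i a b ha hab hb1] at h1
    rw [dist_edist]
    refine ENNReal.toReal_le_of_le_ofReal (by nlinarith) ?_
    refine h1.trans (ENNReal.ofReal_le_ofReal ?_)
    exact mul_le_mul_of_nonneg_left (le_max_left _ _) (by linarith)
  obtain ⟨hs0, hs1⟩ := hs
  have ha : dist (c i s) p ≤ s * M := by
    have h := key 0 s le_rfl hs0 hs1
    rw [hc0 i, sub_zero] at h
    rwa [dist_comm]
  have hb : dist (c i s) q ≤ (1 - s) * M := by
    have h := key s 1 hs0 hs1 le_rfl
    rwa [hc1 i] at h
  have hdM : d ≤ M := by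
    have h := key 0 1 le_rfl zero_le_one le_rfl
    rw [hc0 i, hc1 i, sub_zero, one_mul] at h
    exact h
  obtain ⟨hγa, hγb⟩ := hγ s ⟨hs0, hs1⟩
  have hcat := hCAT (c i s) p q (γ s) s ⟨hs0, hs1⟩ hγa hγb
  have h4 : M ^ 2 - d ^ 2 ≤ 4 * ε ^ 2 := by
    have h := hN i hi
    rw [Real.dist_eq] at h
    have := (abs_lt.mp h).2
    linarith
  have hD2 : dist (c i s) (γ s) ^ 2 ≤ ε ^ 2 := by
    have ha2 : dist (c i s) p ^ 2 ≤ (s * M) ^ 2 := by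
      have := mul_self_le_mul_self dist_nonneg ha
      nlinarith
    have hb2 : dist (c i s) q ^ 2 ≤ ((1 - s) * M) ^ 2 := by
      have := mul_self_le_mul_self dist_nonneg hb
      nlinarith
    have hss : 0 ≤ s * (1 - s) := mul_nonneg hs0 (by linarith)
    have hq14 : s * (1 - s) ≤ 1 / 4 := by nlinarith [sq_nonneg (s - 1 / 2)]
    have h5 : s * (1 - s) * (M ^ 2 - d ^ 2) ≤ s * (1 - s) * (4 * ε ^ 2) :=
      mul_le_mul_of_nonneg_left h4 hss
    have h6 : s * (1 - s) * (4 * ε ^ 2) ≤ (1 / 4) * (4 * ε ^ 2) :=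
      mul_le_mul_of_nonneg_right hq14 (by positivity)
    nlinarith [hcat, ha2, hb2, h5, h6, hs0, hs1]
  nlinarith [hD2, dist_nonneg (x := c i s) (y := γ s), hε]
end

section
/- Let H be a real inner product space and Y : [0,1] → H a C² curve with Y(0) = 0, and suppose (1/2)(d²/dt²)⟨Y(t), Y(t)⟩ ≥ ⟨Y'(t), Y'(t)⟩ for all t ∈ [0,1], where Y' denotes the derivative. Then ⟨Y(1), Y'(1)⟩ ≥ ⟨Y(1), Y(1)⟩. -/
open Set

/-- Inner product space form of Lemma 2.4: if `Y : [0,1] → H` is `C²` with `Y 0 = 0` and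
`(1/2) (⟨Y,Y⟩)'' ≥ ⟨Y',Y'⟩`, then `⟨Y(1), Y'(1)⟩ ≥ ⟨Y(1), Y(1)⟩`. -/
theorem stmt_12 {H : Type*} [NormedAddCommGroup H] [InnerProductSpace ℝ H]
    (Y Y' : ℝ → H) (u' u'' : ℝ → ℝ)
    (hY0 : Y 0 = 0)
    (hY : ∀ t ∈ Set.Icc (0:ℝ) 1, HasDerivWithinAt Y (Y' t) (Set.Icc (0:ℝ) 1) t)
    (hu : ∀ t ∈ Set.Icc (0:ℝ) 1,
      HasDerivWithinAt (fun t => (inner ℝ (Y t) (Y t) : ℝ)) (u' t) (Set.Icc (0:ℝ) 1) t)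
    (hu' : ∀ t ∈ Set.Icc (0:ℝ) 1, HasDerivWithinAt u' (u'' t) (Set.Icc (0:ℝ) 1) t)
    (hineq : ∀ t ∈ Set.Icc (0:ℝ) 1, (1/2) * u'' t ≥ (inner ℝ (Y' t) (Y' t) : ℝ)) :
    (inner ℝ (Y 1) (Y' 1) : ℝ) ≥ (inner ℝ (Y 1) (Y 1) : ℝ) := by
  set u : ℝ → ℝ := fun t => (inner ℝ (Y t) (Y t) : ℝ) with hu_def
  have h1I : (1:ℝ) ∈ Set.Icc (0:ℝ) 1 := Set.right_mem_Icc.mpr zero_le_one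
  have h0I : (0:ℝ) ∈ Set.Icc (0:ℝ) 1 := Set.left_mem_Icc.mpr zero_le_one
  have uniqI : UniqueDiffOn ℝ (Set.Icc (0:ℝ) 1) := uniqueDiffOn_Icc zero_lt_one
  have hu_nonneg : ∀ t, 0 ≤ u t := fun t => real_inner_self_nonneg
  -- identify u'
  have hu'eq : ∀ t ∈ Set.Icc (0:ℝ) 1, u' t = 2 * (inner ℝ (Y t) (Y' t) : ℝ) := by
    intro t ht
    have h1 : HasDerivWithinAt u ((inner ℝ (Y t) (Y' t) : ℝ) + (inner ℝ (Y' t) (Y t) : ℝ))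
        (Set.Icc (0:ℝ) 1) t := (hY t ht).inner ℝ (hY t ht)
    have h2 := (hu t ht).derivWithin (uniqI t ht)
    have h3 := h1.derivWithin (uniqI t ht)
    rw [← h2, h3, real_inner_comm (Y' t) (Y t)]
    ring
  -- u'' nonneg
  have hu''_nonneg : ∀ t ∈ Set.Icc (0:ℝ) 1, 0 ≤ u'' t := by
    intro t ht
    have := hineq t ht
    have h2 : (0:ℝ) ≤ (inner ℝ (Y' t) (Y' t) : ℝ) := real_inner_self_nonneg
    linarith
  -- key differential inequality
  have hkey : ∀ t ∈ Set.Icc (0:ℝ) 1, (u' t) ^ 2 ≤ 2 * u t * u'' t := by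
    intro t ht
    have hcs := real_inner_mul_inner_self_le (Y t) (Y' t)
    have h2 : (inner ℝ (Y' t) (Y' t) : ℝ) ≤ (1/2) * u'' t := hineq t ht
    have h3 : u t * (inner ℝ (Y' t) (Y' t) : ℝ) ≤ u t * ((1/2) * u'' t) :=
      mul_le_mul_of_nonneg_left h2 (hu_nonneg t)
    rw [hu'eq t ht]
    nlinarith [hcs, h3]
  -- main estimate for every ε > 0
  have main : ∀ ε : ℝ, 0 < ε →
      (inner ℝ (Y 1) (Y' 1) : ℝ) ≥ u 1 + ε - Real.sqrt (u 1 + ε) * Real.sqrt ε := by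
    intro ε hε
    have hpos : ∀ t, 0 < u t + ε := fun t => by linarith [hu_nonneg t]
    have hsqrtpos : ∀ t, 0 < Real.sqrt (u t + ε) := fun t => Real.sqrt_pos.mpr (hpos t)
    set v : ℝ → ℝ := fun t => Real.sqrt (u t + ε) with hv_def
    set w : ℝ → ℝ := fun t => u' t / (2 * Real.sqrt (u t + ε)) with hw_def
    -- v has derivative w within Icc
    have hv : ∀ t ∈ Set.Icc (0:ℝ) 1, HasDerivWithinAt v (w t) (Set.Icc (0:ℝ) 1) t := by
      intro t ht
      have := ((hu t ht).add_const ε).sqrt (ne_of_gt (hpos t))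
      simpa [hv_def, hw_def] using this
    -- w has nonneg derivative within Icc
    have hw : ∀ t ∈ Set.Icc (0:ℝ) 1, ∃ d : ℝ, 0 ≤ d ∧
        HasDerivWithinAt w d (Set.Icc (0:ℝ) 1) t := by
      intro t ht
      have hden : HasDerivWithinAt (fun s => 2 * Real.sqrt (u s + ε))
          (2 * (u' t / (2 * Real.sqrt (u t + ε)))) (Set.Icc (0:ℝ) 1) t :=
        (((hu t ht).add_const ε).sqrt (ne_of_gt (hpos t))).const_mul 2
      have hdne : (2 * Real.sqrt (u t + ε)) ≠ 0 := mul_ne_zero two_ne_zero (hsqrtpos t).ne'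
      have hdw := (hu' t ht).div hden hdne
      refine ⟨_, ?_, hdw⟩
      have hs := hsqrtpos t
      have hs2 : Real.sqrt (u t + ε) ^ 2 = u t + ε := Real.sq_sqrt (hpos t).le
      have hnum : 0 ≤ u'' t * (2 * Real.sqrt (u t + ε)) -
          u' t * (2 * (u' t / (2 * Real.sqrt (u t + ε)))) := by
        rw [sub_nonneg]
        have hsne : Real.sqrt (u t + ε) ≠ 0 := hs.ne'
        have h1 : u' t * (2 * (u' t / (2 * Real.sqrt (u t + ε)))) =
            (u' t) ^ 2 / Real.sqrt (u t + ε) := by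
          rw [eq_div_iff hsne]
          field_simp
        rw [h1, div_le_iff₀ hs]
        have h4 : (u' t) ^ 2 ≤ 2 * (u t + ε) * u'' t := by
          have := hkey t ht
          nlinarith [hu''_nonneg t ht, hε]
        have h5 : u'' t * (2 * Real.sqrt (u t + ε)) * Real.sqrt (u t + ε) =
            2 * (u t + ε) * u'' t := by
          linear_combination 2 * u'' t * hs2
        linarith
      positivity
    -- w is monotone on Icc
    have hwmono : MonotoneOn w (Set.Icc (0:ℝ) 1) := by
      apply monotoneOn_of_deriv_nonneg (convex_Icc 0 1)
      · intro t ht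
        obtain ⟨d, _, hd⟩ := hw t ht
        exact hd.continuousWithinAt
      · intro t ht
        rw [interior_Icc] at ht
        obtain ⟨d, _, hd⟩ := hw t (Set.Ioo_subset_Icc_self ht)
        exact ((hd.hasDerivAt (Icc_mem_nhds ht.1 ht.2)).differentiableAt).differentiableWithinAt
      · intro t ht
        rw [interior_Icc] at ht
        obtain ⟨d, hd0, hd⟩ := hw t (Set.Ioo_subset_Icc_self ht)
        rw [(hd.hasDerivAt (Icc_mem_nhds ht.1 ht.2)).deriv]
        exact hd0
    -- mean value theorem for v
    have hvc : ContinuousOn v (Set.Icc (0:ℝ) 1) := fun t ht => (hv t ht).continuousWithinAt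
    have hvd : ∀ t ∈ Set.Ioo (0:ℝ) 1, HasDerivAt v (w t) t := fun t ht =>
      (hv t (Set.Ioo_subset_Icc_self ht)).hasDerivAt (Icc_mem_nhds ht.1 ht.2)
    obtain ⟨c, hc, hceq⟩ := exists_hasDerivAt_eq_slope v w zero_lt_one hvc hvd
    have hwc1 : w c ≤ w 1 := hwmono (Set.Ioo_subset_Icc_self hc) h1I hc.2.le
    have hu0 : u 0 = 0 := by simp [hu_def, hY0]
    have hslope : v 1 - v 0 ≤ w 1 := by
      have : w c = v 1 - v 0 := by rw [hceq, sub_zero, div_one]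
      linarith
    -- unfold
    have hs1 : 0 < Real.sqrt (u 1 + ε) := hsqrtpos 1
    have hsq1 : Real.sqrt (u 1 + ε) * Real.sqrt (u 1 + ε) = u 1 + ε :=
      Real.mul_self_sqrt (hpos 1).le
    have hw1 : w 1 = u' 1 / (2 * Real.sqrt (u 1 + ε)) := rfl
    have hu'1 : u' 1 = 2 * (inner ℝ (Y 1) (Y' 1) : ℝ) := hu'eq 1 h1I
    have : Real.sqrt (u 1 + ε) - Real.sqrt ε ≤
        2 * (inner ℝ (Y 1) (Y' 1) : ℝ) / (2 * Real.sqrt (u 1 + ε)) := by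
      rw [← hu'1, ← hw1]
      simpa [hv_def, hu0] using hslope
    have h2 : (Real.sqrt (u 1 + ε) - Real.sqrt ε) * (2 * Real.sqrt (u 1 + ε)) ≤
        2 * (inner ℝ (Y 1) (Y' 1) : ℝ) :=
      (le_div_iff₀ (by have := hsqrtpos 1; positivity)).mp this
    nlinarith [h2, hsq1]
  -- take the limit ε → 0⁺
  have hlim : Filter.Tendsto (fun ε : ℝ => u 1 + ε - Real.sqrt (u 1 + ε) * Real.sqrt ε)
      (nhdsWithin 0 (Set.Ioi 0)) (nhds (u 1)) := by
    have hc : Continuous (fun ε : ℝ => u 1 + ε - Real.sqrt (u 1 + ε) * Real.sqrt ε) :=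
      (continuous_const.add continuous_id).sub
        ((Real.continuous_sqrt.comp (continuous_const.add continuous_id)).mul
          Real.continuous_sqrt)
    have := hc.tendsto 0
    simp only [add_zero, Real.sqrt_zero, mul_zero, sub_zero] at this
    exact this.mono_left nhdsWithin_le_nhds
  show u 1 ≤ (inner ℝ (Y 1) (Y' 1) : ℝ)
  refine le_of_tendsto hlim ?_
  filter_upwards [self_mem_nhdsWithin] with ε hε
  exact main ε hε
end

section
/- Let X be a CAT(0) space, let c : [0,1] → X be a curve from p to q with length L, parameterized proportionally to arc length, and let γ : [0,1] → X be a constant-speed geodesic from p to q with length l = d(p,q) ≤ L. Then for each s ∈ [0,1], d(c(s), γ(s))² ≤ (1-s)·d(c(s),p)² + s·d(c(s),q)² - s(1-s)·l² (the comparison inequality with A = c(s), B = p, C = q, λ = s), and consequently, since d(c(s),p) ≤ sL and d(c(s),q) ≤ (1-s)L, d(c(s), γ(s))² ≤ s(1-s)(L² - l²) ≤ (L² - l²)/4. -/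
/-- Quantitative estimate behind Theorem 1.3: in a CAT(0) space, a curve of length `L`
from `p` to `q` parameterized proportionally to arc length stays within
`√((L² - l²)/4)` of the geodesic, where `l = d(p,q) ≤ L`. -/
theorem stmt_14 {X : Type*} [MetricSpace X]
    (hCAT : ∀ (A B C P : X) (lam : ℝ), lam ∈ Set.Icc (0:ℝ) 1 →
      dist P B = lam * dist B C → dist P C = (1 - lam) * dist B C →
      dist A P ^ 2 ≤ (1 - lam) * dist A B ^ 2 + lam * dist A C ^ 2
        - lam * (1 - lam) * dist B C ^ 2)
    (p q : X) (l L : ℝ) (hl : dist p q = l) (hlL : l ≤ L)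
    (c γ : ℝ → X) (hc0 : c 0 = p) (hc1 : c 1 = q)
    (s : ℝ) (hs : s ∈ Set.Icc (0:ℝ) 1)
    (hcp : dist (c s) p ≤ s * L) (hcq : dist (c s) q ≤ (1 - s) * L)
    (hγp : dist (γ s) p = s * l) (hγq : dist (γ s) q = (1 - s) * l) :
    dist (c s) (γ s) ^ 2 ≤ (1 - s) * dist (c s) p ^ 2 + s * dist (c s) q ^ 2
        - s * (1 - s) * l ^ 2 ∧
    dist (c s) (γ s) ^ 2 ≤ s * (1 - s) * (L ^ 2 - l ^ 2) ∧
    dist (c s) (γ s) ^ 2 ≤ (L ^ 2 - l ^ 2) / 4 := by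
  obtain ⟨hs0, hs1⟩ := hs
  have hl0 : 0 ≤ l := hl ▸ dist_nonneg
  have hkey := hCAT (c s) p q (γ s) s ⟨hs0, hs1⟩ (by rw [hγp, hl]) (by rw [hγq, hl])
  rw [hl] at hkey
  have h1 : dist (c s) p ^ 2 ≤ (s * L) ^ 2 :=
    pow_le_pow_left₀ dist_nonneg hcp 2
  have h2 : dist (c s) q ^ 2 ≤ ((1 - s) * L) ^ 2 :=
    pow_le_pow_left₀ dist_nonneg hcq 2
  have h3 : dist (c s) (γ s) ^ 2 ≤ s * (1 - s) * (L ^ 2 - l ^ 2) := by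
    nlinarith [sq_nonneg s, sq_nonneg (1 - s)]
  refine ⟨hkey, h3, ?_⟩
  have h4 : s * (1 - s) ≤ 1 / 4 := by nlinarith [sq_nonneg (s - 1/2)]
  have h5 : 0 ≤ L ^ 2 - l ^ 2 := by nlinarith
  nlinarith [mul_le_mul_of_nonneg_right h4 h5]
end
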